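/- arXiv:1008.0492 — 7 statements merged into one kernel-verified Lean document; each statement's English description precedes it below -/
import Mathlib

section
/- Let P be a 2×m matrix with nonnegative entries, with row sums s_1 and s_2. Then the sum of squares of all 2×2 minors of P is at most s_1^2 * s_2^2. -/
lemma aux_cross (m : ℕ) (a b : Fin m → ℝ) (ha : ∀ i, 0 ≤ a i) (hb : ∀ i, 0 ≤ b i) :
    ∑ i : Fin m, ∑ j ∈ Finset.univ.filter (fun j => i < j), (a i * b j + a j * b i)
      ≤ (∑ i, a i) * (∑ j, b j) := by
  rw [Finset.sum_mul_sum]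
  have h1 : ∑ i : Fin m, ∑ j ∈ Finset.univ.filter (fun j => i < j), a i * b j
      = ∑ p ∈ (Finset.univ ×ˢ Finset.univ).filter (fun p : Fin m × Fin m => p.1 < p.2),
          a p.1 * b p.2 := by
    rw [Finset.sum_filter, Finset.sum_product]
    simp [Finset.sum_filter]
  have h2 : ∑ i : Fin m, ∑ j ∈ Finset.univ.filter (fun j => i < j), a j * b i
      = ∑ p ∈ (Finset.univ ×ˢ Finset.univ).filter (fun p : Fin m × Fin m => p.2 < p.1),
          a p.1 * b p.2 := by
    rw [Finset.sum_filter, Finset.sum_product]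
    simp only [Finset.sum_filter]
    rw [Finset.sum_comm]
  simp only [Finset.sum_add_distrib]
  rw [h1, h2]
  have h3 : ∑ p ∈ (Finset.univ ×ˢ Finset.univ).filter (fun p : Fin m × Fin m => p.2 < p.1),
        a p.1 * b p.2
      ≤ ∑ p ∈ (Finset.univ ×ˢ Finset.univ).filter
          (fun p : Fin m × Fin m => ¬ p.1 < p.2), a p.1 * b p.2 := by
    apply Finset.sum_le_sum_of_subset_of_nonneg
    · intro p hp
      simp only [Finset.mem_filter] at hp ⊢
      exact ⟨hp.1, not_lt_of_gt hp.2⟩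
    · intro p _ _
      exact mul_nonneg (ha _) (hb _)
  calc ∑ p ∈ (Finset.univ ×ˢ Finset.univ).filter (fun p : Fin m × Fin m => p.1 < p.2),
          a p.1 * b p.2
        + ∑ p ∈ (Finset.univ ×ˢ Finset.univ).filter (fun p : Fin m × Fin m => p.2 < p.1),
          a p.1 * b p.2
      ≤ ∑ p ∈ (Finset.univ ×ˢ Finset.univ).filter (fun p : Fin m × Fin m => p.1 < p.2),
          a p.1 * b p.2
        + ∑ p ∈ (Finset.univ ×ˢ Finset.univ).filter
            (fun p : Fin m × Fin m => ¬ p.1 < p.2), a p.1 * b p.2 := by linarith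
    _ = ∑ p ∈ Finset.univ ×ˢ Finset.univ, a p.1 * b p.2 :=
        Finset.sum_filter_add_sum_filter_not _ _ _
    _ = ∑ i : Fin m, ∑ j : Fin m, a i * b j := by rw [Finset.sum_product]

theorem stmt_4 (m : ℕ) (hm : 2 ≤ m) (P : Matrix (Fin 2) (Fin m) ℝ)
    (hP : ∀ i j, 0 ≤ P i j) :
    ∑ i : Fin m, ∑ j ∈ Finset.univ.filter (fun j => i < j),
        (P 0 i * P 1 j - P 0 j * P 1 i) ^ 2
      ≤ (∑ j, P 0 j) ^ 2 * (∑ j, P 1 j) ^ 2 := by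
  set a : Fin m → ℝ := P 0 with ha
  set b : Fin m → ℝ := P 1 with hb
  have ha0 : ∀ i, 0 ≤ a i := fun i => hP 0 i
  have hb0 : ∀ i, 0 ≤ b i := fun i => hP 1 i
  -- abs sum bound
  have habs : ∑ i : Fin m, ∑ j ∈ Finset.univ.filter (fun j => i < j),
      |a i * b j - a j * b i| ≤ (∑ i, a i) * (∑ j, b j) := by
    refine le_trans ?_ (aux_cross m a b ha0 hb0)
    apply Finset.sum_le_sum
    intro i _
    apply Finset.sum_le_sum
    intro j _
    rw [abs_sub_le_iff]
    constructor
    · nlinarith [mul_nonneg (ha0 j) (hb0 i)]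
    · nlinarith [mul_nonneg (ha0 i) (hb0 j)]
  have habs0 : 0 ≤ ∑ i : Fin m, ∑ j ∈ Finset.univ.filter (fun j => i < j),
      |a i * b j - a j * b i| := by
    apply Finset.sum_nonneg; intro i _
    apply Finset.sum_nonneg; intro j _
    exact abs_nonneg _
  have hsq : ∑ i : Fin m, ∑ j ∈ Finset.univ.filter (fun j => i < j),
      (a i * b j - a j * b i) ^ 2
      ≤ (∑ i : Fin m, ∑ j ∈ Finset.univ.filter (fun j => i < j),
          |a i * b j - a j * b i|) ^ 2 := by
    calc ∑ i : Fin m, ∑ j ∈ Finset.univ.filter (fun j => i < j),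
          (a i * b j - a j * b i) ^ 2
        = ∑ i : Fin m, ∑ j ∈ Finset.univ.filter (fun j => i < j),
          |a i * b j - a j * b i| ^ 2 := by simp [sq_abs]
      _ ≤ ∑ i : Fin m, (∑ j ∈ Finset.univ.filter (fun j => i < j),
          |a i * b j - a j * b i|) ^ 2 := by
          apply Finset.sum_le_sum
          intro i _
          exact Finset.sum_sq_le_sq_sum_of_nonneg (fun j _ => abs_nonneg _)
      _ ≤ _ := Finset.sum_sq_le_sq_sum_of_nonneg
            (fun i _ => Finset.sum_nonneg fun j _ => abs_nonneg _)
  calc ∑ i : Fin m, ∑ j ∈ Finset.univ.filter (fun j => i < j),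
        (a i * b j - a j * b i) ^ 2
      ≤ (∑ i : Fin m, ∑ j ∈ Finset.univ.filter (fun j => i < j),
          |a i * b j - a j * b i|) ^ 2 := hsq
    _ ≤ ((∑ i, a i) * (∑ j, b j)) ^ 2 := by
        apply pow_le_pow_left₀ habs0 habs
    _ = (∑ j, a j) ^ 2 * (∑ j, b j) ^ 2 := by ring
end

section
/- Let P be an n×m matrix with nonnegative real entries, n ≤ m, and let s_i = Σ_j P i j be the row sums. Then the sum, over all pairs of rows p < q and all pairs of columns i < j, of (P p i * P q j - P p j * P q i)^2 is at most Σ_{p<q} s_p^2 * s_q^2. -/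
theorem stmt_7 (n m : ℕ) (hn : 2 ≤ n) (hnm : n ≤ m)
    (P : Matrix (Fin n) (Fin m) ℝ) (hP : ∀ i j, 0 ≤ P i j)
    (s : Fin n → ℝ) (hs : ∀ p, s p = ∑ j, P p j) :
    ∑ p : Fin n, ∑ q ∈ Finset.univ.filter (fun q => p < q),
      ∑ i : Fin m, ∑ j ∈ Finset.univ.filter (fun j => i < j),
        (P p i * P q j - P p j * P q i) ^ 2
      ≤ ∑ p : Fin n, ∑ q ∈ Finset.univ.filter (fun q => p < q),
          (s p) ^ 2 * (s q) ^ 2 := by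
  have key : ∀ (a b : Fin m → ℝ), (∀ i, 0 ≤ a i) → (∀ i, 0 ≤ b i) →
      ∑ i : Fin m, ∑ j ∈ Finset.univ.filter (fun j => i < j),
        (a i * b j - a j * b i) ^ 2 ≤ (∑ i, a i) ^ 2 * (∑ i, b i) ^ 2 := by
    intro a b ha hb
    set g : Fin m → Fin m → ℝ := fun i j => (a i * b j) ^ 2 with hg
    have step1 : ∑ i : Fin m, ∑ j ∈ Finset.univ.filter (fun j => i < j),
        (a i * b j - a j * b i) ^ 2 ≤
        ∑ i : Fin m, ∑ j ∈ Finset.univ.filter (fun j => i < j), (g i j + g j i) := by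
      refine Finset.sum_le_sum fun i _ => Finset.sum_le_sum fun j _ => ?_
      have h1 := mul_nonneg (mul_nonneg (ha i) (hb j)) (mul_nonneg (ha j) (hb i))
      simp only [hg]; nlinarith [h1]
    have swap : ∑ i : Fin m, ∑ j ∈ Finset.univ.filter (fun j => i < j), g j i
        = ∑ i : Fin m, ∑ j ∈ Finset.univ.filter (fun j => j < i), g i j := by
      rw [Finset.sum_comm' (t' := Finset.univ) (s' := fun j => Finset.univ.filter (fun i => i < j))]
      intro i j; simp [and_comm]
    have step2 : ∑ i : Fin m, ∑ j ∈ Finset.univ.filter (fun j => i < j), (g i j + g j i)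
        ≤ ∑ i : Fin m, ∑ j : Fin m, g i j := by
      simp only [Finset.sum_add_distrib]
      rw [swap]
      simp only [← Finset.sum_add_distrib]
      refine Finset.sum_le_sum fun i _ => ?_
      have : (Finset.univ.filter (fun j => i < j)) ∪ (Finset.univ.filter (fun j : Fin m => j < i)) ⊆ Finset.univ := Finset.subset_univ _
      rw [← Finset.sum_union (by
        rw [Finset.disjoint_filter]
        intro x _ hx hx2
        exact absurd (lt_trans hx hx2) (lt_irrefl i))]
      exact Finset.sum_le_sum_of_subset_of_nonneg this (fun j _ _ => sq_nonneg _)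
    have step3 : ∑ i : Fin m, ∑ j : Fin m, g i j = (∑ i, (a i)^2) * (∑ i, (b i)^2) := by
      rw [Finset.sum_mul_sum]
      exact Finset.sum_congr rfl fun i _ => Finset.sum_congr rfl fun j _ => by
        simp [hg, mul_pow]
    have step4 : (∑ i, (a i)^2) * (∑ i, (b i)^2) ≤ (∑ i, a i) ^ 2 * (∑ i, b i) ^ 2 := by
      have h1 := Finset.sum_sq_le_sq_sum_of_nonneg (s := Finset.univ) (f := a) (fun i _ => ha i)
      have h2 := Finset.sum_sq_le_sq_sum_of_nonneg (s := Finset.univ) (f := b) (fun i _ => hb i)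
      have : (0:ℝ) ≤ ∑ i, (b i)^2 := Finset.sum_nonneg fun i _ => sq_nonneg _
      have : (0:ℝ) ≤ (∑ i, a i)^2 := sq_nonneg _
      nlinarith [Finset.sum_nonneg (fun i (_ : i ∈ Finset.univ) => sq_nonneg (a i)),
        Finset.sum_nonneg (fun i (_ : i ∈ Finset.univ) => sq_nonneg (b i))]
    calc _ ≤ _ := step1
      _ ≤ _ := step2
      _ = _ := step3
      _ ≤ _ := step4
  refine Finset.sum_le_sum fun p _ => Finset.sum_le_sum fun q _ => ?_
  rw [hs p, hs q]
  exact key (P p) (P q) (hP p) (hP q)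
end

section
/- A matrix P with nonnegative entries and all entries summing to 1 has all its 2×2 minors equal to zero if and only if there exist nonnegative vectors p (column) and q (row) with P i j = p i * q j for all i, j. -/
theorem stmt_9 (n m : ℕ) (P : Matrix (Fin n) (Fin m) ℝ)
    (hP : ∀ i j, 0 ≤ P i j) (htot : ∑ i, ∑ j, P i j = 1) :
    (∀ p q : Fin n, ∀ i j : Fin m, p ≠ q → i ≠ j →
        P p i * P q j - P p j * P q i = 0) ↔
    ∃ (p : Fin n → ℝ) (q : Fin m → ℝ), (∀ i, 0 ≤ p i) ∧ (∀ j, 0 ≤ q j) ∧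
      ∀ i j, P i j = p i * q j := by
  constructor
  · intro h
    refine ⟨fun i => ∑ j, P i j, fun j => ∑ i, P i j,
      fun i => Finset.sum_nonneg fun j _ => hP i j,
      fun j => Finset.sum_nonneg fun i _ => hP i j, ?_⟩
    intro i j
    have key : ∀ k l, P i l * P k j = P i j * P k l := by
      intro k l
      by_cases hk : k = i
      · subst hk; ring
      by_cases hl : l = j
      · subst hl; ring
      · have := h i k j l (fun e => hk e.symm) (fun e => hl e.symm)
        linarith
    have : (∑ l, P i l) * (∑ k, P k j) = P i j * ∑ k, ∑ l, P k l := by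
      rw [Finset.sum_mul_sum, Finset.mul_sum, Finset.sum_comm]
      apply Finset.sum_congr rfl
      intro l _
      rw [Finset.mul_sum]
      apply Finset.sum_congr rfl
      intro k _
      exact key l k
    rw [this]
    rw [htot, mul_one]
  · rintro ⟨p, q, _, _, hpq⟩ a b i j _ _
    simp [hpq]; ring
end

section
/- For a nonnegative matrix P (n×m, n ≤ m, all row sums positive, total sum 1), define μ = Σ over row pairs p<q and column pairs i<j of (P p i * P q j - P p j * P q i)^2 and μ_f = Σ_{p<q} s_p^2 s_q^2 where s_p are row sums. Then the coefficient k = μ/μ_f satisfies 0 ≤ k ≤ 1. -/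
open Finset

lemma pair_bound (m : ℕ) (a b : Fin m → ℝ) (ha : ∀ i, 0 ≤ a i) (hb : ∀ i, 0 ≤ b i) :
    ∑ i : Fin m, ∑ j ∈ Finset.univ.filter (fun j => i < j),
      (a i * b j - a j * b i) ^ 2 ≤ (∑ i, a i) ^ 2 * (∑ i, b i) ^ 2 := by
  set S : Finset (Fin m × Fin m) := (Finset.univ ×ˢ Finset.univ).filter (fun x => x.1 < x.2) with hS
  have hconv : ∀ f : Fin m → Fin m → ℝ,
      (∑ i : Fin m, ∑ j ∈ Finset.univ.filter (fun j => i < j), f i j) = ∑ x ∈ S, f x.1 x.2 := by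
    intro f
    rw [hS, Finset.sum_filter, Finset.sum_product]
    simp [Finset.sum_filter]
  rw [hconv]
  have step1 : ∑ x ∈ S, (a x.1 * b x.2 - a x.2 * b x.1) ^ 2
      ≤ ∑ x ∈ S, (a x.1 * b x.2 + a x.2 * b x.1) ^ 2 := by
    apply Finset.sum_le_sum
    intro x _
    have h1 := ha x.1; have h2 := ha x.2; have h3 := hb x.1; have h4 := hb x.2
    nlinarith [mul_nonneg (mul_nonneg h1 h4) (mul_nonneg h2 h3)]
  have step2 : ∑ x ∈ S, (a x.1 * b x.2 + a x.2 * b x.1) ^ 2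
      ≤ (∑ x ∈ S, (a x.1 * b x.2 + a x.2 * b x.1)) ^ 2 := by
    apply Finset.sum_sq_le_sq_sum_of_nonneg
    intro x _
    have h1 := ha x.1; have h2 := ha x.2; have h3 := hb x.1; have h4 := hb x.2
    positivity
  have step3 : ∑ x ∈ S, (a x.1 * b x.2 + a x.2 * b x.1)
      ≤ ∑ x ∈ Finset.univ ×ˢ Finset.univ, a x.1 * b x.2 := by
    set S' : Finset (Fin m × Fin m) := (Finset.univ ×ˢ Finset.univ).filter (fun x => x.2 < x.1) with hS'
    have hswap : ∑ x ∈ S, a x.2 * b x.1 = ∑ x ∈ S', a x.1 * b x.2 := by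
      apply Finset.sum_nbij' (fun x => (x.2, x.1)) (fun x => (x.2, x.1)) <;>
        simp [hS, hS']
    rw [Finset.sum_add_distrib, hswap]
    have hdisj : Disjoint S S' := by
      rw [Finset.disjoint_filter]
      intro x _ h1 h2
      exact absurd (lt_trans h1 h2) (lt_irrefl _)
    rw [← Finset.sum_union hdisj]
    apply Finset.sum_le_sum_of_subset_of_nonneg
    · intro x hx
      simp
    · intro x _ _
      exact mul_nonneg (ha _) (hb _)
  have hfull : ∑ x ∈ Finset.univ ×ˢ Finset.univ, a x.1 * b x.2 = (∑ i, a i) * (∑ i, b i) := by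
    rw [Finset.sum_product, ← Finset.sum_mul_sum]
  have hS0 : 0 ≤ ∑ x ∈ S, (a x.1 * b x.2 + a x.2 * b x.1) := by
    apply Finset.sum_nonneg
    intro x _
    have := mul_nonneg (ha x.1) (hb x.2); have := mul_nonneg (ha x.2) (hb x.1)
    linarith
  calc ∑ x ∈ S, (a x.1 * b x.2 - a x.2 * b x.1) ^ 2
      ≤ (∑ x ∈ S, (a x.1 * b x.2 + a x.2 * b x.1)) ^ 2 := le_trans step1 step2
    _ ≤ ((∑ i, a i) * (∑ i, b i)) ^ 2 := by
        rw [← hfull]; exact pow_le_pow_left₀ hS0 step3 2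
    _ = (∑ i, a i) ^ 2 * (∑ i, b i) ^ 2 := mul_pow _ _ _

theorem stmt_10 (n m : ℕ) (hn : 2 ≤ n) (hnm : n ≤ m)
    (P : Matrix (Fin n) (Fin m) ℝ) (hP : ∀ i j, 0 ≤ P i j)
    (htot : ∑ i, ∑ j, P i j = 1)
    (s : Fin n → ℝ) (hs : ∀ p, s p = ∑ j, P p j) (hspos : ∀ p, 0 < s p)
    (μ μf : ℝ)
    (hμ : μ = ∑ p : Fin n, ∑ q ∈ Finset.univ.filter (fun q => p < q),
      ∑ i : Fin m, ∑ j ∈ Finset.univ.filter (fun j => i < j),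
        (P p i * P q j - P p j * P q i) ^ 2)
    (hμf : μf = ∑ p : Fin n, ∑ q ∈ Finset.univ.filter (fun q => p < q),
        (s p) ^ 2 * (s q) ^ 2) :
    0 ≤ μ / μf ∧ μ / μf ≤ 1 := by
  have hμ0 : 0 ≤ μ := by
    rw [hμ]
    apply Finset.sum_nonneg; intro p _
    apply Finset.sum_nonneg; intro q _
    apply Finset.sum_nonneg; intro i _
    apply Finset.sum_nonneg; intro j _
    positivity
  have hμf0 : 0 < μf := by
    rw [hμf]
    apply Finset.sum_pos'
    · intro p _
      apply Finset.sum_nonneg; intro q _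
      have := hspos p; have := hspos q
      positivity
    · refine ⟨⟨0, by omega⟩, Finset.mem_univ _, ?_⟩
      apply Finset.sum_pos
      · intro q _
        have := hspos (⟨0, by omega⟩ : Fin n); have := hspos q
        positivity
      · exact ⟨⟨1, by omega⟩, by simp [Fin.lt_def]⟩
  have hle : μ ≤ μf := by
    rw [hμ, hμf]
    apply Finset.sum_le_sum; intro p _
    apply Finset.sum_le_sum; intro q _
    have := pair_bound m (P p) (P q) (hP p) (hP q)
    rw [hs p, hs q]
    exact this
  exact ⟨div_nonneg hμ0 hμf0.le, (div_le_one hμf0).mpr hle⟩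
end

section
/- With μ, μ_f as above, μ = μ_f holds if and only if each row of P contains exactly one nonzero entry and these entries lie in pairwise distinct columns. -/
/-!
By Lagrange's identity the `(p, q)` term of `μ` is `‖P p‖² ‖P q‖² - ⟪P p, P q⟫²`. For a nonnegative
vector `u` one has `‖u‖² ≤ (∑ u)²`, with equality exactly when `u` has at most one nonzero entry, so
each term of `μ` is at most the corresponding term `s p² s q²` of `μ_f`. Hence `μ = μ_f` forces
equality in every term; as the row sums are positive, this says that both rows have a single nonzero
entry and are orthogonal, i.e. their nonzero entries sit in different columns. Since `n ≥ 2`, every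
row occurs in some pair.
-/

open Finset

section SumSq

variable {ι R : Type*} [Fintype ι] [DecidableEq ι] [CommRing R]

lemma sq_sum_sub_sum_sq (u : ι → R) :
    (∑ i, u i) ^ 2 - ∑ i, u i ^ 2 = ∑ i, ∑ j ∈ univ.erase i, u i * u j := by
  rw [sq, sum_mul_sum, ← sum_sub_distrib]
  refine sum_congr rfl fun i _ => ?_
  rw [← add_sum_erase _ _ (mem_univ i)]
  ring

lemma sum_sq_eq_sq_sum_iff_of_nonneg [LinearOrder R] [IsStrictOrderedRing R] {u : ι → R}
    (hu : 0 ≤ u) : ∑ i, u i ^ 2 = (∑ i, u i) ^ 2 ↔ Pairwise fun i j => u i * u j = 0 := by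
  have huu : ∀ i j, 0 ≤ u i * u j := fun i j => mul_nonneg (hu i) (hu j)
  rw [eq_comm, ← sub_eq_zero, sq_sum_sub_sum_sq,
    sum_eq_zero_iff_of_nonneg fun i _ => sum_nonneg fun j _ => huu i j]
  simp only [mem_univ, true_implies, Pairwise]
  refine forall_congr' fun i => ?_
  rw [sum_eq_zero_iff_of_nonneg fun j _ => huu i j]
  simp only [mem_erase, mem_univ, and_true, ne_comm]

end SumSq

section Arithmetic

variable {R : Type*} [CommRing R] [LinearOrder R] [IsStrictOrderedRing R] {x y z X Y : R}

lemma mul_sub_sq_le_mul (hx : 0 ≤ x) (hy : 0 ≤ y) (hxX : x ≤ X) (hyY : y ≤ Y) :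
    x * y - z ^ 2 ≤ X * Y := by
  nlinarith [mul_le_mul hxX hyY hy (hx.trans hxX), sq_nonneg z]

lemma mul_sub_sq_eq_mul_iff (hx : 0 ≤ x) (hy : 0 ≤ y) (hxX : x ≤ X) (hyY : y ≤ Y) (hX : 0 < X)
    (hY : 0 < Y) : x * y - z ^ 2 = X * Y ↔ x = X ∧ y = Y ∧ z = 0 := by
  refine ⟨fun h => ?_, by rintro ⟨rfl, rfl, rfl⟩; ring⟩
  have hxy : x * y ≤ X * y := mul_le_mul_of_nonneg_right hxX hy
  have hXy : X * y ≤ X * Y := mul_le_mul_of_nonneg_left hyY hX.le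
  have hz : z ^ 2 = 0 := by nlinarith [sq_nonneg z]
  have hxy_eq : x * y = X * Y := by nlinarith
  refine ⟨?_, ?_, pow_eq_zero_iff two_ne_zero |>.mp hz⟩
  · nlinarith [mul_le_mul_of_nonneg_left hyY hx]
  · nlinarith

end Arithmetic

section Wedge

variable {ι R : Type*} [Fintype ι] [LinearOrder ι] [CommRing R]

lemma sum_sum_eq_two_nsmul_sum_sum_filter_lt {M : Type*} [AddCommMonoid M] (F : ι → ι → M)
    (hF : ∀ i j, F i j = F j i) (hdiag : ∀ i, F i i = 0) :
    ∑ i, ∑ j, F i j = 2 • ∑ i, ∑ j ∈ univ.filter (fun j => i < j), F i j := by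
  have hsplit : ∀ i j, F i j = (if i < j then F i j else 0) + (if j < i then F j i else 0) := by
    intro i j
    rcases lt_trichotomy i j with h | rfl | h
    · simp [h, h.not_gt]
    · simp [hdiag]
    · simp [h, h.not_gt, hF i j]
  simp_rw [sum_filter, two_nsmul]
  conv_lhs => enter [2, i, 2, j]; rw [hsplit i j]
  simp_rw [sum_add_distrib]
  rw [sum_comm (f := fun i j => if j < i then F j i else 0)]

def wedgeSq (u v : ι → R) : R :=
  ∑ i, ∑ j ∈ univ.filter (fun j => i < j), (u i * v j - u j * v i) ^ 2

variable [LinearOrder R] [IsStrictOrderedRing R]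

theorem wedgeSq_eq (u v : ι → R) :
    wedgeSq u v = (∑ i, u i ^ 2) * (∑ i, v i ^ 2) - (∑ i, u i * v i) ^ 2 := by
  have h := sum_sum_eq_two_nsmul_sum_sum_filter_lt (fun i j => (u i * v j - u j * v i) ^ 2)
    (fun i j => by ring) (fun i => by ring)
  have hfull : ∑ i, ∑ j, (u i * v j - u j * v i) ^ 2
      = 2 * ((∑ i, u i ^ 2) * (∑ i, v i ^ 2) - (∑ i, u i * v i) ^ 2) := by
    have e : ∀ i j, (u i * v j - u j * v i) ^ 2
        = u i ^ 2 * v j ^ 2 + v i ^ 2 * u j ^ 2 - 2 * ((u i * v i) * (u j * v j)) := by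
      intro i j; ring
    simp_rw [e, sum_sub_distrib, sum_add_distrib, ← mul_sum, ← sum_mul]
    ring
  rw [hfull, two_nsmul, ← two_mul] at h
  exact (mul_left_cancel₀ two_ne_zero h).symm

variable {u v : ι → R}

theorem wedgeSq_le_sq_sum_mul_sq_sum (hu : 0 ≤ u) (hv : 0 ≤ v) :
    wedgeSq u v ≤ (∑ i, u i) ^ 2 * (∑ i, v i) ^ 2 := by
  rw [wedgeSq_eq]
  exact mul_sub_sq_le_mul (sum_nonneg fun i _ => sq_nonneg _) (sum_nonneg fun i _ => sq_nonneg _)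
    (sum_sq_le_sq_sum_of_nonneg fun i _ => hu i) (sum_sq_le_sq_sum_of_nonneg fun i _ => hv i)

theorem wedgeSq_eq_sq_sum_mul_sq_sum_iff (hu : 0 ≤ u) (hv : 0 ≤ v) (hu₀ : 0 < ∑ i, u i)
    (hv₀ : 0 < ∑ i, v i) :
    wedgeSq u v = (∑ i, u i) ^ 2 * (∑ i, v i) ^ 2 ↔
      (Pairwise fun i j => u i * u j = 0) ∧ (Pairwise fun i j => v i * v j = 0) ∧
        ∀ i, u i * v i = 0 := by
  rw [wedgeSq_eq, mul_sub_sq_eq_mul_iff (sum_nonneg fun i _ => sq_nonneg _)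
    (sum_nonneg fun i _ => sq_nonneg _) (sum_sq_le_sq_sum_of_nonneg fun i _ => hu i)
    (sum_sq_le_sq_sum_of_nonneg fun i _ => hv i) (pow_pos hu₀ 2) (pow_pos hv₀ 2),
    sum_sq_eq_sq_sum_iff_of_nonneg hu, sum_sq_eq_sq_sum_iff_of_nonneg hv,
    sum_eq_zero_iff_of_nonneg fun i _ => mul_nonneg (hu i) (hv i)]
  simp only [mem_univ, true_implies]

end Wedge

section Pairs

variable {ι : Type*} [LinearOrder ι]

lemma sum_sum_filter_lt_eq_iff_of_le [Fintype ι] {M : Type*} [AddCommMonoid M] [PartialOrder M]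
    [IsOrderedCancelAddMonoid M] {f g : ι → ι → M} (h : ∀ p q, p < q → f p q ≤ g p q) :
    ∑ p, ∑ q ∈ univ.filter (fun q => p < q), f p q
        = ∑ p, ∑ q ∈ univ.filter (fun q => p < q), g p q ↔
      ∀ p q, p < q → f p q = g p q := by
  have hle : ∀ p, ∀ q ∈ univ.filter (fun q => p < q), f p q ≤ g p q := fun p q hq =>
    h p q (mem_filter.1 hq).2
  rw [sum_eq_sum_iff_of_le fun p _ => sum_le_sum (hle p)]
  simp only [sum_eq_sum_iff_of_le (hle _), mem_filter, mem_univ, true_and, true_implies]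

lemma forall_lt_and_and_iff [Nontrivial ι] {A : ι → Prop} {O : ι → ι → Prop}
    (hO : ∀ p q, O p q → O q p) :
    (∀ p q, p < q → A p ∧ A q ∧ O p q) ↔ (∀ p, A p) ∧ Pairwise O := by
  refine ⟨fun h => ⟨fun p => ?_, fun p q hpq => ?_⟩,
    fun h p q hpq => ⟨h.1 p, h.1 q, h.2 hpq.ne⟩⟩
  · obtain ⟨q, hq⟩ := exists_ne p
    rcases hq.lt_or_gt with hqp | hpq
    · exact (h q p hqp).2.1
    · exact (h p q hpq).1
  · rcases hpq.lt_or_gt with hpq | hqp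
    · exact (h p q hpq).2.2
    · exact hO q p (h q p hqp).2.2

end Pairs

section Support

variable {ι κ M₀ : Type*} [MulZeroClass M₀] [NoZeroDivisors M₀]

lemma pairwise_mul_eq_zero_iff_exists {u : κ → M₀} (hu : ∃ j, u j ≠ 0) :
    (Pairwise fun i j => u i * u j = 0) ↔ ∃ k, u k ≠ 0 ∧ ∀ j, j ≠ k → u j = 0 := by
  constructor
  · obtain ⟨k, hk⟩ := hu
    exact fun h => ⟨k, hk, fun j hjk => (mul_eq_zero.1 (h hjk)).resolve_right hk⟩
  · rintro ⟨k, -, hk⟩ i j hij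
    rcases eq_or_ne i k with rfl | hik
    · rw [hk j hij.symm, mul_zero]
    · rw [hk i hik, zero_mul]

theorem pairwise_mul_eq_zero_iff_exists_injective {P : ι → κ → M₀}
    (hP : ∀ p, ∃ j, P p j ≠ 0) :
    ((∀ p, Pairwise fun i j => P p i * P p j = 0) ∧
        Pairwise fun p q => ∀ i, P p i * P q i = 0) ↔
      ∃ c : ι → κ, Function.Injective c ∧ (∀ p, P p (c p) ≠ 0) ∧
        ∀ p j, j ≠ c p → P p j = 0 := by
  simp only [fun p => pairwise_mul_eq_zero_iff_exists (hP p)]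
  constructor
  · rintro ⟨hrow, hcol⟩
    choose c hc₀ hc using hrow
    refine ⟨c, fun p q hpq => by_contra fun hne => ?_, hc₀, hc⟩
    exact mul_ne_zero (hc₀ p) (hpq ▸ hc₀ q) (hcol hne (c p))
  · rintro ⟨c, hinj, hc₀, hc⟩
    refine ⟨fun p => ⟨c p, hc₀ p, hc p⟩, fun p q hpq i => ?_⟩
    rcases eq_or_ne i (c p) with rfl | hip
    · rw [hc q (c p) (hinj.ne hpq), mul_zero]
    · rw [hc p i hip, zero_mul]

end Support

theorem stmt_12_general (n m : ℕ) (hn : 2 ≤ n)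
    (P : Matrix (Fin n) (Fin m) ℝ) (hP : ∀ i j, 0 ≤ P i j)
    (s : Fin n → ℝ) (hs : ∀ p, s p = ∑ j, P p j) (hspos : ∀ p, 0 < s p)
    (μ μf : ℝ)
    (hμ : μ = ∑ p : Fin n, ∑ q ∈ Finset.univ.filter (fun q => p < q),
      ∑ i : Fin m, ∑ j ∈ Finset.univ.filter (fun j => i < j),
        (P p i * P q j - P p j * P q i) ^ 2)
    (hμf : μf = ∑ p : Fin n, ∑ q ∈ Finset.univ.filter (fun q => p < q),
        (s p) ^ 2 * (s q) ^ 2) :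
    μ = μf ↔ ∃ c : Fin n → Fin m, Function.Injective c ∧
      (∀ p, P p (c p) ≠ 0) ∧ (∀ p j, j ≠ c p → P p j = 0) := by
  have : Nontrivial (Fin n) := Fin.nontrivial_iff_two_le.2 hn
  have hrow : ∀ p, 0 ≤ P p := fun p j => hP p j
  have hsum : ∀ p, 0 < ∑ j, P p j := fun p => hs p ▸ hspos p
  have hμ' : μ = ∑ p, ∑ q ∈ univ.filter (fun q => p < q), wedgeSq (P p) (P q) := hμ
  rw [hμ', hμf, sum_sum_filter_lt_eq_iff_of_le fun p q _ => by
    simpa only [hs] using wedgeSq_le_sq_sum_mul_sq_sum (hrow p) (hrow q)]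
  simp only [hs, wedgeSq_eq_sq_sum_mul_sq_sum_iff (hrow _) (hrow _) (hsum _) (hsum _)]
  rw [forall_lt_and_and_iff fun p q h i => by rw [mul_comm]; exact h i]
  exact pairwise_mul_eq_zero_iff_exists_injective fun p =>
    let ⟨j, _, hj⟩ := exists_ne_zero_of_sum_ne_zero (hsum p).ne'; ⟨j, hj⟩

theorem stmt_12 (n m : ℕ) (hn : 2 ≤ n) (hnm : n ≤ m)
    (P : Matrix (Fin n) (Fin m) ℝ) (hP : ∀ i j, 0 ≤ P i j)
    (s : Fin n → ℝ) (hs : ∀ p, s p = ∑ j, P p j) (hspos : ∀ p, 0 < s p)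
    (μ μf : ℝ)
    (hμ : μ = ∑ p : Fin n, ∑ q ∈ Finset.univ.filter (fun q => p < q),
      ∑ i : Fin m, ∑ j ∈ Finset.univ.filter (fun j => i < j),
        (P p i * P q j - P p j * P q i) ^ 2)
    (hμf : μf = ∑ p : Fin n, ∑ q ∈ Finset.univ.filter (fun q => p < q),
        (s p) ^ 2 * (s q) ^ 2) :
    μ = μf ↔ ∃ c : Fin n → Fin m, Function.Injective c ∧
      (∀ p, P p (c p) ≠ 0) ∧ (∀ p j, j ≠ c p → P p j = 0) :=
  stmt_12_general n m hn P hP s hs hspos μ μf hμ hμf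
end

section
/- If a nonnegative n×m matrix P satisfies: every row and every column contains at most one nonzero entry (complete dependence), then for every pair of rows p < q, Σ_{i<j} (P p i * P q j - P p j * P q i)^2 = s_p^2 * s_q^2 where s_p, s_q are the row sums. -/
theorem stmt_15 (n m : ℕ) (P : Matrix (Fin n) (Fin m) ℝ)
    (hP : ∀ i j, 0 ≤ P i j)
    (hrow : ∀ p : Fin n, ∀ i j : Fin m, P p i ≠ 0 → P p j ≠ 0 → i = j)
    (hcol : ∀ j : Fin m, ∀ p q : Fin n, P p j ≠ 0 → P q j ≠ 0 → p = q)
    (s : Fin n → ℝ) (hs : ∀ p, s p = ∑ j, P p j) :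
    ∀ p q : Fin n, p < q →
      ∑ i : Fin m, ∑ j ∈ Finset.univ.filter (fun j => i < j),
          (P p i * P q j - P p j * P q i) ^ 2
        = (s p) ^ 2 * (s q) ^ 2 := by
  intro p q hpq
  have hpq' : p ≠ q := ne_of_lt hpq
  by_cases hzp : ∀ j, P p j = 0
  · have hsp : s p = 0 := by rw [hs]; exact Finset.sum_eq_zero fun j _ => hzp j
    have : (∑ i : Fin m, ∑ j ∈ Finset.univ.filter (fun j => i < j),
        (P p i * P q j - P p j * P q i) ^ 2) = 0 := by
      apply Finset.sum_eq_zero; intro i _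
      apply Finset.sum_eq_zero; intro j _
      simp [hzp]
    rw [this, hsp]; ring
  · by_cases hzq : ∀ j, P q j = 0
    · have hsq : s q = 0 := by rw [hs]; exact Finset.sum_eq_zero fun j _ => hzq j
      have : (∑ i : Fin m, ∑ j ∈ Finset.univ.filter (fun j => i < j),
          (P p i * P q j - P p j * P q i) ^ 2) = 0 := by
        apply Finset.sum_eq_zero; intro i _
        apply Finset.sum_eq_zero; intro j _
        simp [hzq]
      rw [this, hsq]; ring
    · push_neg at hzp hzq
      obtain ⟨a, ha⟩ := hzp
      obtain ⟨b, hb⟩ := hzq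
      have hpz : ∀ j, j ≠ a → P p j = 0 := by
        intro j hj; by_contra h; exact hj (hrow p j a h ha)
      have hqz : ∀ j, j ≠ b → P q j = 0 := by
        intro j hj; by_contra h; exact hj (hrow q j b h hb)
      have hab : a ≠ b := by
        intro h; apply hpq'; exact hcol a p q ha (h ▸ hb)
      have hsp : s p = P p a := by
        rw [hs]; exact Finset.sum_eq_single a (fun j _ hj => hpz j hj) (by simp)
      have hsq : s q = P q b := by
        rw [hs]; exact Finset.sum_eq_single b (fun j _ hj => hqz j hj) (by simp)
      rw [hsp, hsq]
      rcases lt_or_gt_of_ne hab with hlt | hgt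
      · rw [Finset.sum_eq_single a]
        · rw [Finset.sum_eq_single_of_mem b (by simp [hlt])]
          · rw [hpz b hab.symm]; ring
          · intro j hj hjb
            simp only [Finset.mem_filter] at hj
            rw [hpz j (ne_of_gt hj.2), hqz j hjb]; ring
        · intro i _ hia
          apply Finset.sum_eq_zero; intro j hj
          simp only [Finset.mem_filter] at hj
          rw [hpz i hia]
          by_cases hja : j = a
          · subst hja
            rw [hqz i (fun h => absurd hlt (not_lt.2 (le_of_lt (h ▸ hj.2))))]
            ring
          · rw [hpz j hja]; ring
        · simp
      · rw [Finset.sum_eq_single b]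
        · rw [Finset.sum_eq_single_of_mem a (by simp [hgt])]
          · rw [hpz b hab.symm, hqz a hab]; ring
          · intro j hj hja
            simp only [Finset.mem_filter] at hj
            rw [hpz j hja, hqz j (ne_of_gt hj.2)]; ring
        · intro i _ hib
          apply Finset.sum_eq_zero; intro j hj
          simp only [Finset.mem_filter] at hj
          rw [hqz i hib]
          by_cases hjb : j = b
          · subst hjb
            rw [hpz i (fun h => absurd hgt (not_lt.2 (le_of_lt (h ▸ hj.2))))]
            ring
          · rw [hqz j hjb]; ring
        · simp
end

section
/- Given fixed positive row sums s_1,...,s_n and n ≤ m, the maximum of μ = Σ_{p<q, i<j}(P p i P q j - P p j P q i)^2 over all nonnegative n×m matrices P with row sums s is exactly Σ_{p<q} s_p^2 s_q^2, attained by any matrix placing each full row sum in a distinct column. -/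
open Finset

lemma aux_split {m : ℕ} (g : Fin m → Fin m → ℝ) (hsym : ∀ i j, g i j = g j i)
    (hdiag : ∀ i, g i i = 0) :
    ∑ i : Fin m, ∑ j : Fin m, g i j
      = 2 * ∑ i : Fin m, ∑ j ∈ Finset.univ.filter (fun j => i < j), g i j := by
  have h1 : ∀ i : Fin m, ∑ j : Fin m, g i j
      = (∑ j ∈ univ.filter (fun j => i < j), g i j)
        + (∑ j ∈ univ.filter (fun j => j < i), g i j) := by
    intro i
    rw [← Finset.sum_filter_add_sum_filter_not univ (fun j => i < j)]
    congr 1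
    refine (Finset.sum_subset ?_ ?_).symm
    · intro j hj
      simp only [mem_filter, mem_univ, true_and] at hj ⊢
      exact not_lt_of_gt hj
    · intro j hjt hjs
      simp only [mem_filter, mem_univ, true_and, not_lt] at hjt hjs
      rw [le_antisymm hjt hjs, hdiag]
  have h2 : ∑ i : Fin m, ∑ j ∈ univ.filter (fun j => j < i), g i j
      = ∑ i : Fin m, ∑ j ∈ univ.filter (fun j => i < j), g i j := by
    simp_rw [Finset.sum_filter]
    rw [Finset.sum_comm]
    refine Finset.sum_congr rfl fun i _ => Finset.sum_congr rfl fun j _ => ?_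
    by_cases h : i < j <;> simp [h, hsym]
  simp_rw [h1, Finset.sum_add_distrib, h2]
  ring

lemma aux_lagrange {m : ℕ} (a b : Fin m → ℝ) :
    ∑ i : Fin m, ∑ j ∈ Finset.univ.filter (fun j => i < j),
        (a i * b j - a j * b i) ^ 2
      = (∑ i, (a i) ^ 2) * (∑ i, (b i) ^ 2) - (∑ i, a i * b i) ^ 2 := by
  have hsym : ∀ i j : Fin m, (a i * b j - a j * b i) ^ 2 = (a j * b i - a i * b j) ^ 2 :=
    fun i j => by ring
  have hdiag : ∀ i : Fin m, (a i * b i - a i * b i) ^ 2 = 0 := fun i => by ring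
  have key := aux_split (fun i j => (a i * b j - a j * b i) ^ 2) hsym hdiag
  have expand : ∑ i : Fin m, ∑ j : Fin m, (a i * b j - a j * b i) ^ 2
      = 2 * ((∑ i, (a i) ^ 2) * (∑ i, (b i) ^ 2) - (∑ i, a i * b i) ^ 2) := by
    have h : ∀ i : Fin m, ∑ j : Fin m, (a i * b j - a j * b i) ^ 2
        = (a i) ^ 2 * (∑ j, (b j) ^ 2) + (b i) ^ 2 * (∑ j, (a j) ^ 2)
          - (2 * (a i * b i)) * (∑ j, a j * b j) := by
      intro i
      calc ∑ j : Fin m, (a i * b j - a j * b i) ^ 2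
          = ∑ j : Fin m, ((a i) ^ 2 * (b j) ^ 2 + (b i) ^ 2 * (a j) ^ 2
              - (2 * (a i * b i)) * (a j * b j)) :=
            Finset.sum_congr rfl fun j _ => by ring
        _ = _ := by
            rw [Finset.sum_sub_distrib, Finset.sum_add_distrib, ← Finset.mul_sum,
              ← Finset.mul_sum, ← Finset.mul_sum]
    simp_rw [h, Finset.sum_sub_distrib, Finset.sum_add_distrib, ← Finset.sum_mul]
    have h2 : ∑ x : Fin m, 2 * (a x * b x) = 2 * ∑ x, a x * b x := by
      rw [Finset.mul_sum]
    rw [h2]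
    ring
  rw [expand] at key
  linarith

lemma aux_sq_sum_le {m : ℕ} (a : Fin m → ℝ) (ha : ∀ i, 0 ≤ a i) :
    ∑ i, (a i) ^ 2 ≤ (∑ i, a i) ^ 2 := by
  rw [sq, Finset.sum_mul]
  refine Finset.sum_le_sum fun i _ => ?_
  rw [sq]
  exact mul_le_mul_of_nonneg_left
    (Finset.single_le_sum (fun j _ => ha j) (mem_univ i)) (ha i)

lemma aux_eq (n m : ℕ) (s : Fin n → ℝ) (P : Matrix (Fin n) (Fin m) ℝ)
    (hP : ∀ p j, 0 ≤ P p j) (hrow : ∀ p, ∑ j, P p j = s p)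
    (c : Fin n → Fin m) (hc : Function.Injective c)
    (hz : ∀ p j, j ≠ c p → P p j = 0) :
    ∑ p : Fin n, ∑ q ∈ Finset.univ.filter (fun q => p < q),
        ∑ i : Fin m, ∑ j ∈ Finset.univ.filter (fun j => i < j),
          (P p i * P q j - P p j * P q i) ^ 2
      = ∑ p : Fin n, ∑ q ∈ Finset.univ.filter (fun q => p < q),
          (s p) ^ 2 * (s q) ^ 2 := by
  have hval : ∀ p, P p (c p) = s p := by
    intro p
    rw [← hrow p, Finset.sum_eq_single (c p)]
    · intro j _ hj; exact hz p j hj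
    · simp
  refine Finset.sum_congr rfl fun p _ => Finset.sum_congr rfl fun q hq => ?_
  have hpq : p < q := by simpa using hq
  rw [aux_lagrange (fun i => P p i) (fun i => P q i)]
  have hA : ∀ r : Fin n, ∑ i, (P r i) ^ 2 = (s r) ^ 2 := by
    intro r
    rw [Finset.sum_eq_single (c r)]
    · rw [hval]
    · intro j _ hj; rw [hz r j hj]; ring
    · simp
  have hC : ∑ i, P p i * P q i = 0 := by
    refine Finset.sum_eq_zero fun i _ => ?_
    by_cases h : i = c p
    · have : i ≠ c q := by
        rw [h]; exact fun hh => absurd (hc hh) (ne_of_lt hpq)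
      rw [hz q i this, mul_zero]
    · rw [hz p i h, zero_mul]
  rw [hA, hA, hC]
  ring

theorem stmt_18 (n m : ℕ) (hn : 2 ≤ n) (hnm : n ≤ m)
    (s : Fin n → ℝ) (hs : ∀ p, 0 < s p) :
    IsGreatest
      {x : ℝ | ∃ P : Matrix (Fin n) (Fin m) ℝ,
        (∀ p j, 0 ≤ P p j) ∧ (∀ p, ∑ j, P p j = s p) ∧
        x = ∑ p : Fin n, ∑ q ∈ Finset.univ.filter (fun q => p < q),
          ∑ i : Fin m, ∑ j ∈ Finset.univ.filter (fun j => i < j),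
            (P p i * P q j - P p j * P q i) ^ 2}
      (∑ p : Fin n, ∑ q ∈ Finset.univ.filter (fun q => p < q),
        (s p) ^ 2 * (s q) ^ 2) ∧
    ∀ P : Matrix (Fin n) (Fin m) ℝ,
      (∀ p j, 0 ≤ P p j) → (∀ p, ∑ j, P p j = s p) →
      (∃ c : Fin n → Fin m, Function.Injective c ∧ ∀ p j, j ≠ c p → P p j = 0) →
      ∑ p : Fin n, ∑ q ∈ Finset.univ.filter (fun q => p < q),
        ∑ i : Fin m, ∑ j ∈ Finset.univ.filter (fun j => i < j),
          (P p i * P q j - P p j * P q i) ^ 2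
        = ∑ p : Fin n, ∑ q ∈ Finset.univ.filter (fun q => p < q),
            (s p) ^ 2 * (s q) ^ 2 := by
  constructor
  · constructor
    · -- membership
      refine ⟨fun p j => if j = Fin.castLE hnm p then s p else 0, ?_, ?_, ?_⟩
      · intro p j
        by_cases h : j = Fin.castLE hnm p <;> simp [h, le_of_lt (hs p)]
      · intro p
        simp [Finset.sum_ite_eq']
      · refine (aux_eq n m s _ ?_ ?_ (Fin.castLE hnm) (Fin.castLE_injective hnm) ?_).symm
        · intro p j
          by_cases h : j = Fin.castLE hnm p <;> simp [h, le_of_lt (hs p)]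
        · intro p; simp [Finset.sum_ite_eq']
        · intro p j hj; simp [hj]
    · -- upper bound
      rintro x ⟨P, hP, hrow, rfl⟩
      refine Finset.sum_le_sum fun p _ => Finset.sum_le_sum fun q hq => ?_
      rw [aux_lagrange (fun i => P p i) (fun i => P q i)]
      have h1 : (∑ i, (P p i) ^ 2) * (∑ i, (P q i) ^ 2) ≤ (s p) ^ 2 * (s q) ^ 2 := by
        refine mul_le_mul ?_ ?_ ?_ ?_
        · rw [← hrow p]; exact aux_sq_sum_le _ (hP p)
        · rw [← hrow q]; exact aux_sq_sum_le _ (hP q)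
        · exact Finset.sum_nonneg fun i _ => sq_nonneg _
        · exact sq_nonneg _
      nlinarith [sq_nonneg (∑ i, P p i * P q i)]
  · rintro P hP hrow ⟨c, hc, hz⟩
    exact aux_eq n m s P hP hrow c hc hz
end
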